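/- arXiv:1502.05637 — 3 statements merged into one kernel-verified Lean document; each statement's English description precedes it below -/
import Mathlib

section
/- For every complex number z, |e^{1-z} + e^{z̄}| > π, where z̄ denotes the complex conjugate of z. -/
theorem stmt_6 (z : ℂ) :
    ‖Complex.exp (1 - z) + Complex.exp (starRingEnd ℂ z)‖ > Real.pi := by
  set x := z.re
  set y := z.im
  have h1 : (1 - z) = (↑(1 - x) : ℂ) + (↑(-y) : ℂ) * Complex.I := by
    simp [Complex.ext_iff, x, y]
  have h2 : (starRingEnd ℂ z) = (↑x : ℂ) + (↑(-y) : ℂ) * Complex.I := by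
    simp [Complex.ext_iff, x, y]
  have key : Complex.exp (1 - z) + Complex.exp (starRingEnd ℂ z)
      = Complex.exp ((↑(-y) : ℂ) * Complex.I) * (↑(Real.exp (1 - x) + Real.exp x) : ℂ) := by
    rw [h1, h2, Complex.exp_add, Complex.exp_add, ← Complex.ofReal_exp, ← Complex.ofReal_exp]
    push_cast
    ring
  rw [key, norm_mul, Complex.norm_exp, Complex.norm_real, Real.norm_eq_abs]
  have hre : ((↑(-y) : ℂ) * Complex.I).re = 0 := by simp
  rw [hre, Real.exp_zero, one_mul]
  have he1 : Real.exp (1 - x) > 0 := Real.exp_pos _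
  have he2 : Real.exp x > 0 := Real.exp_pos _
  rw [abs_of_pos (by linarith)]
  -- AM-GM: exp(1-x) + exp x ≥ 2 * exp (1/2)
  have hsq : Real.exp ((1 - x) / 2) ^ 2 = Real.exp (1 - x) := by
    rw [sq, ← Real.exp_add]; ring_nf
  have hsq2 : Real.exp (x / 2) ^ 2 = Real.exp x := by
    rw [sq, ← Real.exp_add]; ring_nf
  have hprod : Real.exp ((1 - x) / 2) * Real.exp (x / 2) = Real.exp (1 / 2) := by
    rw [← Real.exp_add]; ring_nf
  have hAM := sq_nonneg (Real.exp ((1 - x) / 2) - Real.exp (x / 2))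
  have hge : Real.exp (1 - x) + Real.exp x ≥ 2 * Real.exp (1 / 2) := by nlinarith
  -- 2 * exp(1/2) > π  since 4 e > π²
  have heone : Real.exp 1 > 2.7182818283 := Real.exp_one_gt_d9
  have hpi : Real.pi < 3.141593 := Real.pi_lt_d6
  have hh : Real.exp (1 / 2) ^ 2 = Real.exp 1 := by
    rw [sq, ← Real.exp_add]; norm_num
  have hp : Real.exp (1 / 2) > 0 := Real.exp_pos _
  nlinarith [hge, hh, hp, heone, hpi]
end

section
/- There is no positive real number x with x^i = i^x in the sense that e^{i·ln x} = e^{x·(iπ/2)} and (equivalently) the real equation e^{π/2} = x^{1/x} has no solution for x > 0. -/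
theorem stmt_8 : ¬ ∃ x : ℝ, 0 < x ∧ x ^ (1 / x : ℝ) = Real.exp (Real.pi / 2) := by
  rintro ⟨x, hx, hEq⟩
  rw [Real.rpow_def_of_pos hx] at hEq
  have h := Real.exp_injective hEq
  have hlog : Real.log x ≤ x - 1 := Real.log_le_sub_one_of_pos hx
  have h1 : Real.log x * (1 / x) < Real.pi / 2 := by
    have : Real.log x * (1 / x) ≤ (x - 1) / x := by
      rw [mul_one_div]
      exact div_le_div_of_nonneg_right hlog hx.le |>.trans_eq rfl
    have h2 : (x - 1) / x < 1 := by
      rw [div_lt_one hx]; linarith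
    have hpi : (1:ℝ) < Real.pi / 2 := by
      have := Real.pi_gt_three; linarith
    linarith
  rw [h] at h1
  exact lt_irrefl _ h1
end

section
/- Let V be a finite-dimensional complex vector space and J : V ⊗ V → V ⊗ V a linear map with J ∘ J = -id and J¹² ∘ J²³ = J²³ ∘ J¹², where J¹² = J ⊗ id_V and J²³ = id_V ⊗ J on V ⊗ V ⊗ V. Then R(x) = cos(x)·id + sin(x)·J satisfies the colored Yang–Baxter equation: R¹²(x) ∘ R²³(x+y) ∘ R¹²(y) = R²³(y) ∘ R¹²(x+y) ∘ R²³(x) for all real x, y. -/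
open TensorProduct

theorem stmt_13 (V : Type*) [AddCommGroup V] [Module ℂ V] [FiniteDimensional ℂ V]
    (J : Module.End ℂ (V ⊗[ℂ] V))
    (hJ2 : J ∘ₗ J = -LinearMap.id)
    (J12 : Module.End ℂ ((V ⊗[ℂ] V) ⊗[ℂ] V))
    (J23 : Module.End ℂ ((V ⊗[ℂ] V) ⊗[ℂ] V))
    (hJ12 : J12 = TensorProduct.map J LinearMap.id)
    (hJ23 : J23 = (TensorProduct.assoc ℂ V V V).symm.conj
        (TensorProduct.map LinearMap.id J))
    (hcomm : J12 ∘ₗ J23 = J23 ∘ₗ J12)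
    (R : ℝ → Module.End ℂ ((V ⊗[ℂ] V) ⊗[ℂ] V) → Module.End ℂ ((V ⊗[ℂ] V) ⊗[ℂ] V))
    (hR : ∀ x K, R x K = (Real.cos x : ℂ) • LinearMap.id + (Real.sin x : ℂ) • K)
    (x y : ℝ) :
    R x J12 ∘ₗ R (x + y) J23 ∘ₗ R y J12 = R y J23 ∘ₗ R (x + y) J12 ∘ₗ R x J23 := by
  have ha : J12 * J12 = -1 := by
    rw [hJ12]
    rw [show (TensorProduct.map J LinearMap.id) * (TensorProduct.map J LinearMap.id)
      = TensorProduct.map (J ∘ₗ J) (LinearMap.id ∘ₗ LinearMap.id) from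
      (TensorProduct.map_comp ..).symm]
    rw [hJ2]
    ext v w
    simp [neg_tmul]
  have hb : J23 * J23 = -1 := by
    rw [hJ23]
    rw [show ∀ f g : Module.End ℂ (V ⊗[ℂ] (V ⊗[ℂ] V)),
      ((TensorProduct.assoc ℂ V V V).symm.conj f) * ((TensorProduct.assoc ℂ V V V).symm.conj g)
      = (TensorProduct.assoc ℂ V V V).symm.conj (f ∘ₗ g) from
      fun f g => ((TensorProduct.assoc ℂ V V V).symm.conj_comp g f).symm]
    rw [show (TensorProduct.map (LinearMap.id (M := V)) J) ∘ₗ (TensorProduct.map LinearMap.id J)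
      = TensorProduct.map (LinearMap.id ∘ₗ LinearMap.id) (J ∘ₗ J) from
      (TensorProduct.map_comp ..).symm]
    rw [hJ2]
    ext v w u
    simp [tmul_neg, LinearEquiv.conj_apply]
  set a := J12 with hadef
  set b := J23 with hbdef
  have hab : b * a = a * b := by
    simp only [Module.End.mul_eq_comp]; exact hcomm.symm
  have ha' : a * a = (-1 : ℂ) • 1 := by rw [ha]; ext v; simp
  have hb' : b * b = (-1 : ℂ) • 1 := by rw [hb]; ext v; simp
  have haa : ∀ z : Module.End ℂ ((V ⊗[ℂ] V) ⊗[ℂ] V), a * (a * z) = (-1 : ℂ) • z := by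
    intro z; rw [← mul_assoc, ha]; ext v; simp
  have hbb : ∀ z : Module.End ℂ ((V ⊗[ℂ] V) ⊗[ℂ] V), b * (b * z) = (-1 : ℂ) • z := by
    intro z; rw [← mul_assoc, hb]; ext v; simp
  have hba : ∀ z : Module.End ℂ ((V ⊗[ℂ] V) ⊗[ℂ] V), b * (a * z) = a * (b * z) := by
    intro z; rw [← mul_assoc, hab, mul_assoc]
  simp only [hR, ← Module.End.mul_eq_comp, ← Module.End.one_eq_id]
  simp only [mul_add, add_mul, smul_mul_assoc, mul_smul_comm, smul_smul,
    mul_assoc, haa, hbb, hba, ha', hb', hab, one_mul, mul_one]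
  match_scalars <;> (simp only [Complex.cos_add, Complex.sin_add]; push_cast; ring)
end
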